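/- Let G be a group and H, K subgroups. If there exists a subset X of G with G = HXK and the product HXK direct, then Mid_G(H,K) = G, i.e., for every g ∈ G the product H{g}K is direct. -/
import Mathlib


open scoped Pointwise

/-- The product `A * B` of subsets is *direct*: representations are unique. -/
def Direct2 {G : Type*} [Group G] (A B : Set G) : Prop :=
  ∀ a ∈ A, ∀ a' ∈ A, ∀ b ∈ B, ∀ b' ∈ B, a * b = a' * b' → a = a' ∧ b = b'

/-- The product `A * X * B` is *direct*. -/
def Direct3 {G : Type*} [Group G] (A X B : Set G) : Prop :=
  ∀ a ∈ A, ∀ a' ∈ A, ∀ x ∈ X, ∀ x' ∈ X, ∀ b ∈ B, ∀ b' ∈ B,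
    a * x * b = a' * x' * b' → a = a' ∧ x = x' ∧ b = b'

/-- The product `A * X * B` is *middle direct*. -/
def MidDirect3 {G : Type*} [Group G] (A X B : Set G) : Prop :=
  ∀ a ∈ A, ∀ a' ∈ A, ∀ x ∈ X, ∀ x' ∈ X, ∀ b ∈ B, ∀ b' ∈ B,
    a * x * b = a' * x' * b' → x = x'

/-- `Mid_G(A,B)`: the set of `g` such that `A * {g} * B` is direct. -/
def Mid {G : Type*} [Group G] (A B : Set G) : Set G :=
  {g | Direct3 A {g} B}

/-- `T` is a right transversal of `H`: each `g ∈ G` lies in `H*t` for exactly one `t ∈ T`. -/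
def IsRightTransversal {G : Type*} [Group G] (H : Subgroup G) (T : Set G) : Prop :=
  ∀ g : G, ∃! t, t ∈ T ∧ ∃ h ∈ H, g = h * t

/-- `X` is a complete set of representatives of the `(H,K)` double cosets. -/
def IsDoubleCosetReps {G : Type*} [Group G] (H K : Subgroup G) (X : Set G) : Prop :=
  ∀ g : G, ∃! x, x ∈ X ∧ ∃ h ∈ H, ∃ k ∈ K, g = h * x * k

theorem stmt13 {G : Type*} [Group G] (H K : Subgroup G)
    (h : ∃ X : Set G, (H : Set G) * X * (K : Set G) = Set.univ ∧
      Direct3 (H : Set G) X (K : Set G)) :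
    Mid (H : Set G) (K : Set G) = Set.univ := by
  obtain ⟨X, hcov, hdir⟩ := h
  ext g
  simp only [Set.mem_univ, iff_true]
  have hg : g ∈ (H : Set G) * X * (K : Set G) := by rw [hcov]; trivial
  obtain ⟨hx, hhx, k0, hk0, rfl⟩ := hg
  obtain ⟨h0, hh0, x, hxX, rfl⟩ := hhx
  intro a ha a' ha' y hy y' hy' b hb b' hb' heq
  rcases hy with rfl
  rcases hy' with rfl
  -- a * (h0*x*k0) * b = a' * (h0*x*k0) * b'
  have key : (a * h0) * x * (k0 * b) = (a' * h0) * x * (k0 * b') := by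
    simpa only [mul_assoc] using heq
  have := hdir (a * h0) (mul_mem ha hh0) (a' * h0) (mul_mem ha' hh0)
    x hxX x hxX (k0 * b) (mul_mem hk0 hb) (k0 * b') (mul_mem hk0 hb') key
  obtain ⟨h1, -, h3⟩ := this
  refine ⟨mul_right_cancel h1, rfl, mul_left_cancel h3⟩
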